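/- arXiv:1407.0480 — 3 statements merged into one kernel-verified Lean document; each statement's English description precedes it below -/
import Mathlib

section
/- Let F be a field, G an abelian group, A a nonassociative F-algebra, and Γ : A = ⊕_{g∈G} A_g a G-grading on A. Let F[G] denote the group algebra of G over F. Then there is a unique F[G]-algebra automorphism θ_Γ of A ⊗_F F[G] such that θ_Γ(a ⊗ r) = a ⊗ (g·r) for every g ∈ G, a ∈ A_g, and r ∈ F[G] (where g·r denotes multiplication in F[G] by the basis element g). -/
open scoped TensorProduct

universe u

section GradingDefs

variable {F : Type*} [Field F] {A : Type*} [NonUnitalNonAssocSemiring A] [Module F A]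

/-- The family `comp` of `F`-subspaces is a grading of the nonassociative `F`-algebra `A`
by the abelian group `G`: `A` is the (internal) direct sum of the subspaces `comp g`, and
`comp g * comp h ⊆ comp (g * h)`. -/
def IsGrading {G : Type*} [CommGroup G] (comp : G → Submodule F A) : Prop :=
  iSupIndep comp ∧ (⨆ g, comp g) = ⊤ ∧
    ∀ (g h : G) (a b : A), a ∈ comp g → b ∈ comp h → a * b ∈ comp (g * h)

/-- The support of a grading: those degrees with nonzero homogeneous component. -/
def gradingSupp {G : Type*} [CommGroup G] (comp : G → Submodule F A) : Set G :=
  {g | comp g ≠ ⊥}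

/-- A linear automorphism of `A` is an algebra automorphism if it preserves multiplication. -/
def IsAlgAut (φ : A ≃ₗ[F] A) : Prop := ∀ a b : A, φ (a * b) = φ a * φ b

/-- Two `G`-gradings are isomorphic if some algebra automorphism maps each homogeneous
component of the first onto the component of the same degree of the second. -/
def GradingIso {G : Type*} [CommGroup G] (comp comp' : G → Submodule F A) : Prop :=
  ∃ φ : A ≃ₗ[F] A, IsAlgAut φ ∧
    ∀ g, (comp g).map (φ : A →ₗ[F] A) = comp' g

/-- A `G`-grading and an `H`-grading are equivalent if there are a bijection `α` between the
supports and an algebra automorphism `φ` with `φ (comp g) = comp' (α g)` on the support. -/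
def GradingEquiv {G : Type*} [CommGroup G] {H : Type*} [CommGroup H]
    (comp : G → Submodule F A) (comp' : H → Submodule F A) : Prop :=
  ∃ (α : G → H) (φ : A ≃ₗ[F] A), IsAlgAut φ ∧
    Set.BijOn α (gradingSupp comp) (gradingSupp comp') ∧
    ∀ g ∈ gradingSupp comp, (comp g).map (φ : A →ₗ[F] A) = comp' (α g)

/-- An `H`-indexed family `comp'` refines a `G`-indexed family `comp` if every nonzero
component of `comp'` is contained in some nonzero component of `comp`. -/
def IsRefinement {H : Type*} [CommGroup H] {G : Type*} [CommGroup G]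
    (comp' : H → Submodule F A) (comp : G → Submodule F A) : Prop :=
  ∀ h ∈ gradingSupp comp', ∃ g ∈ gradingSupp comp, comp' h ≤ comp g

/-- A refinement is proper if some containment of a nonzero component of the refinement in a
component of the coarser grading is strict. -/
def IsProperRefinement {H : Type*} [CommGroup H] {G : Type*} [CommGroup G]
    (comp' : H → Submodule F A) (comp : G → Submodule F A) : Prop :=
  IsRefinement comp' comp ∧
    ∃ h ∈ gradingSupp comp', ∃ g ∈ gradingSupp comp, comp' h < comp g

/-- A grading is fine if it admits no proper refinement which is itself a grading by an
abelian group. -/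
def IsFine {G : Type*} [CommGroup G] (comp : G → Submodule F A) : Prop :=
  ∀ (H : Type u) (_ : CommGroup H) (comp' : H → Submodule F A),
    IsGrading comp' → ¬ IsProperRefinement comp' comp

end GradingDefs

/-! Put `χ g = g`, a unit of `F[G]`. Extending `a ↦ χ g ⊗ a` (for `a ∈ A_g`) `F[G]`-linearly
gives `θ_Γ`; the same construction with `χ⁻¹` inverts it, and `θ_Γ` is multiplicative because
`χ` is and `A_g A_h ⊆ A_{gh}`. Uniqueness holds because the tensors `r ⊗ a` with `a`
homogeneous generate `F[G] ⊗ A` additively. -/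

open TensorProduct

section HomogeneousTensors

variable {F : Type*} [CommSemiring F] {A : Type*} [AddCommMonoid A] [Module F A]
  {ι : Type*} {comp : ι → Submodule F A} {R : Type*} [AddCommMonoid R] [Module F R]

theorem TensorProduct.induction_on_homogeneous (htop : ⨆ i, comp i = ⊤)
    {P : R ⊗[F] A → Prop} (x : R ⊗[F] A) (zero : P 0) (add : ∀ x y, P x → P y → P (x + y))
    (tmul : ∀ i, ∀ a ∈ comp i, ∀ r : R, P (r ⊗ₜ a)) : P x := by
  induction x using TensorProduct.induction_on with
  | zero => exact zero
  | add x y hx hy => exact add x y hx hy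
  | tmul r a =>
    refine Submodule.iSup_induction comp (motive := fun a => P (r ⊗ₜ a))
      (htop ▸ Submodule.mem_top) (fun i a ha => tmul i a ha r) ?_ ?_
    · simpa only [tmul_zero] using zero
    · intro a b ha hb
      simpa only [tmul_add] using add _ _ ha hb

theorem TensorProduct.ext_homogeneous {M Φ : Type*} [AddCommMonoid M] [FunLike Φ (R ⊗[F] A) M]
    [AddMonoidHomClass Φ (R ⊗[F] A) M] (htop : ⨆ i, comp i = ⊤) {f g : Φ}
    (h : ∀ i, ∀ a ∈ comp i, ∀ r : R, f (r ⊗ₜ a) = g (r ⊗ₜ a)) : f = g :=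
  DFunLike.ext f g fun x => x.induction_on_homogeneous (P := fun x => f x = g x) htop
    (by rw [map_zero, map_zero]) (fun x y hx hy => by rw [map_add, map_add, hx, hy]) h

end HomogeneousTensors

namespace DirectSum.IsInternal

section Twist

variable {F : Type*} [CommRing F] {A : Type*} [AddCommGroup A] [Module F A]
  {ι : Type*} [DecidableEq ι] {comp : ι → Submodule F A} (hcomp : IsInternal comp)
  {R : Type*} [CommSemiring R] [Algebra F R]

noncomputable def twist (u : ι → R) : R ⊗[F] A →ₗ[R] R ⊗[F] A :=
  LinearMap.liftBaseChange R <|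
    toModule F ι _ (fun i => TensorProduct.mk F R A (u i) ∘ₗ (comp i).subtype) ∘ₗ
      (LinearEquiv.ofBijective (coeLinearMap comp) hcomp).symm.toLinearMap

theorem twist_tmul (u : ι → R) {i : ι} {a : A} (ha : a ∈ comp i) (r : R) :
    hcomp.twist u (r ⊗ₜ a) = (u i * r) ⊗ₜ a := by
  have hdecomp :
      (LinearEquiv.ofBijective (coeLinearMap comp) hcomp).symm a = lof F ι _ i ⟨a, ha⟩ := by
    rw [LinearEquiv.symm_apply_eq]
    exact (coeLinearMap_lof comp i ⟨a, ha⟩).symm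
  rw [twist, LinearMap.liftBaseChange_tmul, LinearMap.comp_apply, LinearEquiv.coe_coe,
    hdecomp, toModule_lof]
  simp [smul_tmul', mul_comm]

noncomputable def twistEquiv (χ : ι → Rˣ) : R ⊗[F] A ≃ₗ[R] R ⊗[F] A :=
  LinearEquiv.ofLinearMap (hcomp.twist fun i => χ i) (hcomp.twist fun i => ↑(χ i)⁻¹)
    (ext_homogeneous hcomp.submodule_iSup_eq_top fun i a ha r => by
      simp [twist_tmul hcomp _ ha])
    (ext_homogeneous hcomp.submodule_iSup_eq_top fun i a ha r => by
      simp [twist_tmul hcomp _ ha])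

theorem twistEquiv_tmul (χ : ι → Rˣ) {i : ι} {a : A} (ha : a ∈ comp i) (r : R) :
    hcomp.twistEquiv χ (r ⊗ₜ a) = (χ i * r) ⊗ₜ a :=
  hcomp.twist_tmul _ ha r

end Twist

section Multiplicative

variable {F : Type*} [CommRing F] {A : Type*} [NonUnitalNonAssocRing A] [Module F A]
  [SMulCommClass F A A] [IsScalarTower F A A]
  {G : Type*} [Monoid G] [DecidableEq G] {comp : G → Submodule F A} (hcomp : IsInternal comp)
  {R : Type*} [CommSemiring R] [Algebra F R]

theorem twist_mul
    (hmul : ∀ (g h : G) (a b : A), a ∈ comp g → b ∈ comp h → a * b ∈ comp (g * h))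
    (u : G →* R) (x y : R ⊗[F] A) :
    hcomp.twist u (x * y) = hcomp.twist u x * hcomp.twist u y := by
  have htop := hcomp.submodule_iSup_eq_top
  induction x using induction_on_homogeneous htop generalizing y with
  | zero => simp
  | add x x' hx hx' => simp only [add_mul, map_add, hx, hx']
  | tmul g a ha r =>
    induction y using induction_on_homogeneous htop with
    | zero => simp
    | add y y' hy hy' => simp only [mul_add, map_add, hy, hy']
    | tmul h b hb s =>
      rw [Algebra.TensorProduct.tmul_mul_tmul, hcomp.twist_tmul u (hmul g h a b ha hb),
        hcomp.twist_tmul u ha, hcomp.twist_tmul u hb, Algebra.TensorProduct.tmul_mul_tmul,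
        map_mul, mul_mul_mul_comm]

theorem twistEquiv_mul
    (hmul : ∀ (g h : G) (a b : A), a ∈ comp g → b ∈ comp h → a * b ∈ comp (g * h))
    (χ : G →* Rˣ) (x y : R ⊗[F] A) :
    hcomp.twistEquiv χ (x * y) = hcomp.twistEquiv χ x * hcomp.twistEquiv χ y :=
  hcomp.twist_mul hmul ((Units.coeHom R).comp χ) x y

end Multiplicative

end DirectSum.IsInternal

/-- a `G`-grading yields a unique `F[G]`-algebra automorphism `θ_Γ` of
`A ⊗_F F[G]` with `θ_Γ (a ⊗ r) = a ⊗ (g·r)` for homogeneous `a` of degree `g`. -/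
theorem grading_generic_automorphism
    {F : Type*} [Field F]
    {A : Type*} [NonUnitalNonAssocRing A] [Module F A]
    [SMulCommClass F A A] [IsScalarTower F A A]
    {G : Type*} [CommGroup G] (comp : G → Submodule F A)
    (hcomp : IsGrading comp) :
    ∃! θ : (MonoidAlgebra F G) ⊗[F] A ≃ₗ[MonoidAlgebra F G] (MonoidAlgebra F G) ⊗[F] A,
      (∀ x y : (MonoidAlgebra F G) ⊗[F] A, θ (x * y) = θ x * θ y) ∧
      ∀ (g : G) (a : A), a ∈ comp g → ∀ r : MonoidAlgebra F G,
        θ (r ⊗ₜ[F] a) = (MonoidAlgebra.of F G g * r) ⊗ₜ[F] a  := by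
  classical
  obtain ⟨hind, htop, hmul⟩ := hcomp
  have hA := DirectSum.isInternal_submodule_of_iSupIndep_of_iSup_eq_top hind htop
  let χ := (MonoidAlgebra.of F G).toHomUnits
  refine ⟨hA.twistEquiv χ,
    ⟨hA.twistEquiv_mul hmul χ, fun g a ha r => hA.twistEquiv_tmul χ ha r⟩, ?_⟩
  rintro θ ⟨-, hθ⟩
  exact ext_homogeneous htop fun g a ha r =>
    (hθ g a ha r).trans (hA.twistEquiv_tmul χ ha r).symm
end

section
/- Let F be an algebraically closed field of characteristic 0, K/F a field extension with K algebraically closed, A a finite-dimensional nonassociative F-algebra, and G a finitely generated abelian group. Let Γ : A = ⊕_{g∈G} A_g and Γ' : A = ⊕_{g∈G} A'_g be G-gradings on A. If the extended gradings Γ_K and Γ'_K on A_K = A ⊗_F K are isomorphic (i.e., some K-algebra automorphism of A_K maps A_g ⊗_F K onto A'_g ⊗_F K for all g ∈ G), then Γ and Γ' are isomorphic (i.e., some F-algebra automorphism of A maps A_g onto A'_g for all g ∈ G). -/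
/-!
In a basis of `A`, an isomorphism from `Γ` to `Γ'` is a matrix satisfying polynomial equations with
coefficients in `F`: multiplicativity against the structure constants, invertibility of the
determinant (through an extra variable), and `φ(A_g) ⊆ A'_g`, tested against the linear forms
vanishing on `A'_g`. The matrix of an isomorphism of `Γ_K` with `Γ'_K` is a common zero in `K`,
so these equations generate a proper ideal, and the Nullstellensatz over the algebraically closed
field `F` gives a common zero in `F`. That zero is an automorphism with `φ(A_g) ⊆ A'_g`, and
equality holds because `dim A_g = dim A'_g` is read off after base change.
-/

open scoped TensorProduct

universe u

theorem MvPolynomial.exists_aeval_eq_zero_of_isAlgClosed {σ : Type*} [Finite σ]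
    {F : Type*} [Field F] [IsAlgClosed F] {K : Type*} [CommRing K] [Nontrivial K] [Algebra F K]
    (S : Set (MvPolynomial σ F)) (x : σ → K) (hx : ∀ p ∈ S, aeval x p = 0) :
    ∃ y : σ → F, ∀ p ∈ S, aeval y p = 0 := by
  have hS : Ideal.span S ≠ ⊤ := by
    intro htop
    have hker : Ideal.span S ≤ RingHom.ker (aeval (R := F) x) := Ideal.span_le.2 hx
    have h1 := hker (htop ▸ Submodule.mem_top : (1 : MvPolynomial σ F) ∈ Ideal.span S)
    simp at h1
  obtain ⟨J, hJ, hSJ⟩ := Ideal.exists_le_maximal _ hS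
  obtain ⟨y, rfl⟩ := eq_vanishingIdeal_singleton_of_isMaximal F hJ
  exact ⟨y, fun p hp => (mem_vanishingIdeal_singleton_iff y p).1 (hSJ (Ideal.subset_span hp))⟩

theorem Submodule.finrank_baseChange {F K M : Type*} [Field F] [Field K] [Algebra F K]
    [AddCommGroup M] [Module F M] (p : Submodule F M) :
    Module.finrank K (p.baseChange K) = Module.finrank F p :=
  (Submodule.toBaseChange.toLinearEquiv K p).finrank_eq.symm.trans Module.finrank_baseChange

theorem Module.Dual.baseChange_apply_eq_zero {F K M : Type*} [CommSemiring F] [CommSemiring K]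
    [Algebra F K] [AddCommMonoid M] [Module F M] {p : Submodule F M} {ℓ : Module.Dual F M}
    (hℓ : ℓ ∈ p.dualAnnihilator) {z : K ⊗[F] M} (hz : z ∈ p.baseChange K) :
    ℓ.baseChange K z = 0 := by
  obtain ⟨w, rfl⟩ := hz
  induction w using TensorProduct.induction_on with
  | zero => simp
  | tmul a m => simp [(Submodule.mem_dualAnnihilator ℓ).1 hℓ m m.2]
  | add w w' hw hw' => simp [hw, hw']

section Coordinates

open Module

variable {R : Type*} {B : Type*} {ι : Type*} [Fintype ι] [DecidableEq ι]

theorem Module.Basis.dual_apply_eq_sum_toMatrix [CommRing R] [AddCommMonoid B] [Module R B]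
    (e : Basis ι R B) (f : B →ₗ[R] B) (ψ : Dual R B) (v : B) :
    ψ (f v) = ∑ i, ψ (e i) * ∑ j, LinearMap.toMatrix e e f i j * e.repr v j := by
  conv_lhs => rw [← e.sum_repr (f v)]
  simp [← LinearMap.toMatrix_mulVec_repr e e f, Matrix.mulVec, dotProduct, mul_comm]

variable [NonUnitalNonAssocSemiring B]

theorem Module.Basis.repr_apply_mul_eq_sum_toMatrix [CommRing R] [Module R B] (e : Basis ι R B)
    (f : B →ₗ[R] B) (i j l : ι) :
    e.repr (f (e i * e j)) l = ∑ k, e.repr (e i * e j) k * LinearMap.toMatrix e e f l k := by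
  conv_lhs => rw [← e.sum_repr (e i * e j)]
  simp only [map_sum, map_smul, Finsupp.coe_finsetSum, Finset.sum_apply, Finsupp.smul_apply,
    smul_eq_mul, LinearMap.toMatrix_apply]

theorem Module.Basis.repr_mul_apply_eq_sum_toMatrix [CommRing R] [Module R B]
    [SMulCommClass R B B] [IsScalarTower R B B] (e : Basis ι R B) (f : B →ₗ[R] B) (i j l : ι) :
    e.repr (f (e i) * f (e j)) l = ∑ p, ∑ q,
      LinearMap.toMatrix e e f p i * LinearMap.toMatrix e e f q j * e.repr (e p * e q) l := by
  conv_lhs => rw [← e.sum_repr (f (e i)), ← e.sum_repr (f (e j))]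
  simp only [Finset.sum_mul_sum, smul_mul_smul_comm, map_sum, map_smul,
    Finsupp.coe_finsetSum, Finset.sum_apply, Finsupp.smul_apply, smul_eq_mul,
    LinearMap.toMatrix_apply]

variable [Field R] [Module R B] [SMulCommClass R B B] [IsScalarTower R B B]

omit [Fintype ι] [DecidableEq ι] in
theorem isAlgAut_iff_basis (e : Basis ι R B) (φ : B ≃ₗ[R] B) :
    IsAlgAut φ ↔ ∀ i j, φ (e i * e j) = φ (e i) * φ (e j) := by
  refine ⟨fun h i j => h _ _, fun h a a' => ?_⟩
  have key : (LinearMap.mul R B).compr₂ (φ : B →ₗ[R] B)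
      = (LinearMap.mul R B).compl₁₂ (φ : B →ₗ[R] B) (φ : B →ₗ[R] B) :=
    LinearMap.ext_basis e e fun i j => h i j
  exact LinearMap.congr_fun₂ key a a'

theorem isAlgAut_iff_toMatrix (e : Basis ι R B) (φ : B ≃ₗ[R] B) :
    IsAlgAut φ ↔ ∀ i j l, ∑ k, e.repr (e i * e j) k * LinearMap.toMatrix e e φ l k =
      ∑ p, ∑ q, LinearMap.toMatrix e e φ p i * LinearMap.toMatrix e e φ q j *
        e.repr (e p * e q) l := by
  simp only [isAlgAut_iff_basis e, ← Module.Basis.repr_apply_mul_eq_sum_toMatrix,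
    ← Module.Basis.repr_mul_apply_eq_sum_toMatrix, ← e.ext_elem_iff]
  rfl

end Coordinates

section TransporterEquations

open MvPolynomial

variable {F : Type*} [CommRing F] {ι : Type*} [Fintype ι]

noncomputable def mulEquation (c : ι → ι → ι → F) (i j l : ι) : MvPolynomial (ι × ι ⊕ Unit) F :=
  ∑ k, C (c i j k) * X (.inl (l, k)) - ∑ p, ∑ q, X (.inl (p, i)) * X (.inl (q, j)) * C (c p q l)

noncomputable def detEquation [DecidableEq ι] : MvPolynomial (ι × ι ⊕ Unit) F :=
  X (.inr ()) * (Matrix.of fun i j => X (.inl (i, j))).det - 1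

noncomputable def annihEquation (ℓ u : ι → F) : MvPolynomial (ι × ι ⊕ Unit) F :=
  ∑ i, C (ℓ i) * ∑ j, X (.inl (i, j)) * C (u j)

variable {R : Type*} [CommRing R] [Algebra F R] (x : ι × ι ⊕ Unit → R)

theorem aeval_mulEquation (c : ι → ι → ι → F) (i j l : ι) :
    aeval x (mulEquation c i j l) = ∑ k, algebraMap F R (c i j k) * x (.inl (l, k)) -
      ∑ p, ∑ q, x (.inl (p, i)) * x (.inl (q, j)) * algebraMap F R (c p q l) := by
  simp [mulEquation]

theorem aeval_detEquation [DecidableEq ι] :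
    aeval x (detEquation : MvPolynomial (ι × ι ⊕ Unit) F) =
      x (.inr ()) * (Matrix.of fun i j => x (.inl (i, j))).det - 1 := by
  rw [detEquation, map_sub, map_mul, map_one, aeval_X, AlgHom.map_det]
  congr 3
  ext
  simp

theorem aeval_annihEquation (ℓ u : ι → F) :
    aeval x (annihEquation ℓ u) =
      ∑ i, algebraMap F R (ℓ i) * ∑ j, x (.inl (i, j)) * algebraMap F R (u j) := by
  simp [annihEquation]

end TransporterEquations

/-- A common zero `x` of these equations encodes, in the basis `b`, an algebra automorphism of `A`
with matrix `x (inl (i, j))` mapping each `comp g` into `comp' g`; `x (inr ())` inverts its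
determinant. -/
def transporterEquations {F : Type*} [Field F] {A : Type*} [NonUnitalNonAssocSemiring A]
    [Module F A] {ι : Type*} [Fintype ι] [DecidableEq ι] {G : Type*} (b : Module.Basis ι F A)
    (comp comp' : G → Submodule F A) : Set (MvPolynomial (ι × ι ⊕ Unit) F) :=
  {p | (∃ i j l, p = mulEquation (fun i j k => b.repr (b i * b j) k) i j l) ∨ p = detEquation ∨
    ∃ g, ∃ v ∈ comp g, ∃ ℓ ∈ (comp' g).dualAnnihilator, p = annihEquation (ℓ ∘ b) (b.repr v)}

section Transporter

open MvPolynomial Module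

variable {F : Type*} [Field F] {A : Type*} [NonUnitalNonAssocRing A] [Module F A]
  [SMulCommClass F A A] [IsScalarTower F A A] {ι : Type*} [Fintype ι] [DecidableEq ι]
  {G : Type*} [CommGroup G] {comp comp' : G → Submodule F A}

theorem exists_aeval_transporterEquations_eq_zero {K : Type*} [Field K] [Algebra F K]
    (b : Basis ι F A)
    (h : GradingIso (fun g => (comp g).baseChange K) (fun g => (comp' g).baseChange K)) :
    ∃ x : ι × ι ⊕ Unit → K, ∀ p ∈ transporterEquations b comp comp', aeval x p = 0 := by
  obtain ⟨φ, hφ, hmap⟩ := h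
  set bK := b.baseChange K
  have hrepr (a : A) (k : ι) : bK.repr (1 ⊗ₜ a) k = algebraMap F K (b.repr a k) := by
    simp [bK, Algebra.algebraMap_eq_smul_one]
  have hconst (i j k : ι) : bK.repr (bK i * bK j) k = algebraMap F K (b.repr (b i * b j) k) := by
    simp [bK, hrepr]
  refine ⟨Sum.elim (fun ij => LinearMap.toMatrix bK bK φ ij.1 ij.2)
    fun _ => (LinearMap.toMatrix bK bK φ.symm).det, ?_⟩
  rintro p (⟨i, j, l, rfl⟩ | rfl | ⟨g, v, hv, ℓ, hℓ, rfl⟩)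
  · simpa [aeval_mulEquation, sub_eq_zero, ← hconst] using
      (isAlgAut_iff_toMatrix bK φ).1 hφ i j l
  · rw [aeval_detEquation, sub_eq_zero]
    change (LinearMap.toMatrix bK bK φ.symm).det * (LinearMap.toMatrix bK bK φ).det = 1
    simp [LinearMap.det_toMatrix]
  · have hφv : φ (1 ⊗ₜ v) ∈ (comp' g).baseChange K := by
      rw [← show _ = (comp' g).baseChange K from hmap g]
      exact Submodule.mem_map_of_mem (Submodule.tmul_mem_baseChange_of_mem 1 hv)
    rw [aeval_annihEquation, ← ℓ.baseChange_apply_eq_zero hℓ hφv]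
    simpa [bK, hrepr, Algebra.smul_def] using
      (bK.dual_apply_eq_sum_toMatrix φ.toLinearMap (ℓ.baseChange K) (1 ⊗ₜ v)).symm

theorem finrank_eq_of_gradingIso_baseChange {K : Type*} [Field K] [Algebra F K]
    (h : GradingIso (fun g => (comp g).baseChange K) (fun g => (comp' g).baseChange K)) (g : G) :
    finrank F (comp g) = finrank F (comp' g) := by
  obtain ⟨φ, -, hmap⟩ := h
  rw [← (comp g).finrank_baseChange (K := K), ← (comp' g).finrank_baseChange (K := K),
    ← show _ = (comp' g).baseChange K from hmap g, LinearEquiv.finrank_map_eq]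

theorem gradingIso_of_aeval_transporterEquations_eq_zero [FiniteDimensional F A]
    (b : Basis ι F A) (hrank : ∀ g, finrank F (comp g) = finrank F (comp' g))
    (x : ι × ι ⊕ Unit → F) (hx : ∀ p ∈ transporterEquations b comp comp', aeval x p = 0) :
    GradingIso comp comp' := by
  set M : Matrix ι ι F := Matrix.of fun i j => x (.inl (i, j))
  have hdet : IsUnit M.det := by
    have := hx _ (Or.inr (Or.inl rfl))
    rw [aeval_detEquation, sub_eq_zero] at this
    exact .of_mul_eq_one_right _ this
  set φ := Matrix.toLinearEquiv b M hdet
  have hφ : LinearMap.toMatrix b b φ = M := LinearMap.toMatrix_toLin b b M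
  refine ⟨φ, ?_, fun g => ?_⟩
  · rw [isAlgAut_iff_toMatrix b, hφ]
    intro i j l
    simpa [aeval_mulEquation, sub_eq_zero, M] using hx _ (Or.inl ⟨i, j, l, rfl⟩)
  · have hle : (comp g).map (φ : A →ₗ[F] A) ≤ comp' g := by
      rintro _ ⟨v, hv, rfl⟩
      refine (Subspace.forall_mem_dualAnnihilator_apply_eq_zero_iff _ _).1 fun ℓ hℓ => ?_
      rw [b.dual_apply_eq_sum_toMatrix, hφ]
      simpa [aeval_annihEquation, M] using hx _ (Or.inr (Or.inr ⟨g, v, hv, ℓ, hℓ, rfl⟩))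
    exact Submodule.eq_of_le_of_finrank_eq hle ((LinearEquiv.finrank_map_eq φ _).trans (hrank g))

end Transporter

theorem gradingIso_of_baseChange_general
    {F : Type*} [Field F] [IsAlgClosed F]
    {K : Type*} [Field K] [Algebra F K]
    {A : Type*} [NonUnitalNonAssocRing A] [Module F A]
    [SMulCommClass F A A] [IsScalarTower F A A] [FiniteDimensional F A]
    {G : Type*} [CommGroup G]
    (comp comp' : G → Submodule F A)
    (h : GradingIso (fun g : G => (comp g).baseChange K)
      (fun g : G => (comp' g).baseChange K)) :
    GradingIso comp comp' := by
  let b := Module.finBasis F A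
  obtain ⟨x, hx⟩ := exists_aeval_transporterEquations_eq_zero b h
  obtain ⟨y, hy⟩ := MvPolynomial.exists_aeval_eq_zero_of_isAlgClosed _ x hx
  exact gradingIso_of_aeval_transporterEquations_eq_zero b
    (finrank_eq_of_gradingIso_baseChange h) y hy

/-- if the scalar extensions of two `G`-gradings on `A` are isomorphic, then
the gradings themselves are isomorphic. -/
theorem gradingIso_of_baseChange
    {F : Type*} [Field F] [IsAlgClosed F] [CharZero F]
    {K : Type*} [Field K] [Algebra F K] [IsAlgClosed K]
    {A : Type*} [NonUnitalNonAssocRing A] [Module F A]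
    [SMulCommClass F A A] [IsScalarTower F A A] [FiniteDimensional F A]
    {G : Type*} [CommGroup G] [Group.FG G]
    (comp comp' : G → Submodule F A)
    (hcomp : IsGrading comp) (hcomp' : IsGrading comp')
    (h : GradingIso (fun g : G => (comp g).baseChange K)
      (fun g : G => (comp' g).baseChange K)) :
    GradingIso comp comp' :=
  gradingIso_of_baseChange_general comp comp' h
end

section
/- Let F be a field, K/F a field extension, A a nonassociative F-algebra, G and H abelian groups, Γ : A = ⊕_{g∈G} A_g a G-grading on A, and Γ̃ : A = ⊕_{h∈H} Ã_h an H-grading on A that is a proper refinement of Γ. Then the extended grading Γ̃_K on A_K = A ⊗_F K is a proper refinement of Γ_K. Consequently, if the extended grading Γ_K is fine, then Γ is fine. -/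
/-! Since `K` is faithfully flat over the field `F`, `Submodule.baseChange K` is an order embedding
that sends `⊥` to `⊥`; it commutes with suprema and, by flatness, preserves disjointness. Hence it
carries gradings to gradings, preserves supports and strict inclusions, and so turns a proper
refinement of `Γ` into one of `Γ_K`. -/

open scoped TensorProduct

universe u

namespace Submodule

section

variable {R M A : Type*} [CommRing R] [AddCommGroup M] [Module R M] [Ring A] [Algebra R A]
  {p q : Submodule R M}

theorem baseChange_iSup {ι : Sort*} (N : ι → Submodule R M) :
    (⨆ i, N i).baseChange A = ⨆ i, (N i).baseChange A := by
  rw [iSup_eq_span, baseChange_span, Set.image_iUnion, span_iUnion]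
  simp_rw [← baseChange_span, span_eq]

theorem disjoint_baseChange [Module.Flat R A] (h : Disjoint p q) :
    Disjoint (p.baseChange A) (q.baseChange A) := by
  have hinj : Function.Injective ((q.mkQ ∘ₗ p.subtype).baseChange A) := by
    rw [LinearMap.baseChange_eq_ltensor]
    refine Module.Flat.lTensor_preserves_injective_linearMap _ ?_
    rwa [← LinearMap.ker_eq_bot, LinearMap.ker_comp, ker_mkQ, ← disjoint_iff_comap_eq_bot]
  have hq : q.mkQ ∘ₗ q.subtype = 0 := by ext; simp
  rw [disjoint_iff_inf_le]
  rintro - ⟨⟨y, rfl⟩, ⟨z, hz⟩⟩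
  suffices y = 0 by simp [this]
  refine hinj ?_
  rw [map_zero, LinearMap.baseChange_comp, LinearMap.comp_apply, ← hz, ← LinearMap.comp_apply,
    ← LinearMap.baseChange_comp, hq, LinearMap.baseChange_zero, LinearMap.zero_apply]

@[simp]
theorem baseChange_lt_iff [Module.FaithfullyFlat R A] :
    p.baseChange A < q.baseChange A ↔ p < q :=
  (baseChangeOrderEmbedding R M A).lt_iff_lt

@[simp]
theorem baseChange_eq_bot_iff [Module.FaithfullyFlat R A] : p.baseChange A = ⊥ ↔ p = ⊥ := by
  rw [← baseChange_bot A, baseChange_inj]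

end

theorem mul_mem_baseChange {R M A : Type*} [CommSemiring R] [NonUnitalNonAssocSemiring M]
    [Module R M] [SMulCommClass R M M] [IsScalarTower R M M] [CommSemiring A] [Algebra R A]
    {p q r : Submodule R M} (hpq : ∀ a ∈ p, ∀ b ∈ q, a * b ∈ r) {x y : A ⊗[R] M}
    (hx : x ∈ p.baseChange A) (hy : y ∈ q.baseChange A) : x * y ∈ r.baseChange A := by
  suffices map₂ (LinearMap.mul A (A ⊗[R] M)) (p.baseChange A) (q.baseChange A) ≤
      r.baseChange A from this (apply_mem_map₂ _ hx hy)
  rw [baseChange_eq_span A p, baseChange_eq_span A q, map₂_span_span, span_le]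
  rintro - ⟨-, ⟨a, ha, rfl⟩, -, ⟨b, hb, rfl⟩, rfl⟩
  simpa [Algebra.TensorProduct.tmul_mul_tmul] using tmul_mem_baseChange_of_mem 1 (hpq a ha b hb)

end Submodule

theorem iSupIndep.baseChange {R M A ι : Type*} [CommRing R] [AddCommGroup M] [Module R M]
    [Ring A] [Algebra R A] [Module.Flat R A] {p : ι → Submodule R M} (h : iSupIndep p) :
    iSupIndep fun i => (p i).baseChange A := by
  intro i
  simpa only [Submodule.baseChange_iSup] using Submodule.disjoint_baseChange (A := A) (h i)

section Grading

variable {F : Type*} [Field F] {K : Type*} [Field K] [Algebra F K]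
  {A : Type*} [NonUnitalNonAssocRing A] [Module F A] [SMulCommClass F A A] [IsScalarTower F A A]
  {G : Type*} [CommGroup G] {H : Type*} [CommGroup H]

variable (K) in
theorem gradingSupp_baseChange (comp : G → Submodule F A) :
    gradingSupp (fun g => (comp g).baseChange K) = gradingSupp comp := by
  ext g
  simp [gradingSupp]

theorem IsGrading.baseChange {comp : G → Submodule F A} (h : IsGrading comp) :
    IsGrading fun g => (comp g).baseChange K := by
  obtain ⟨hindep, hsup, hmul⟩ := h
  refine ⟨hindep.baseChange, ?_, fun g g' x y hx hy => ?_⟩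
  · rw [← Submodule.baseChange_iSup, hsup, Submodule.baseChange_top]
  · exact Submodule.mul_mem_baseChange (fun a ha b hb => hmul g g' a b ha hb) hx hy

theorem IsRefinement.baseChange {comp' : H → Submodule F A}
    {comp : G → Submodule F A} (h : IsRefinement comp' comp) :
    IsRefinement (fun h => (comp' h).baseChange K) (fun g => (comp g).baseChange K) := by
  intro h' hh'
  rw [gradingSupp_baseChange] at hh'
  obtain ⟨g, hg, hle⟩ := h h' hh'
  exact ⟨g, by rwa [gradingSupp_baseChange], Submodule.baseChange_mono K hle⟩

theorem IsProperRefinement.baseChange {comp' : H → Submodule F A}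
    {comp : G → Submodule F A} (h : IsProperRefinement comp' comp) :
    IsProperRefinement (fun h => (comp' h).baseChange K) (fun g => (comp g).baseChange K) := by
  obtain ⟨href, h', hh', g, hg, hlt⟩ := h
  simp only [IsProperRefinement, gradingSupp_baseChange, Submodule.baseChange_lt_iff]
  exact ⟨href.baseChange, h', hh', g, hg, hlt⟩

theorem IsFine.of_baseChange {comp : G → Submodule F A}
    (h : IsFine.{u} fun g => (comp g).baseChange K) : IsFine.{u} comp :=
  fun H _ _ hgr hprop => h H _ _ hgr.baseChange hprop.baseChange

end Grading

theorem properRefinement_baseChange_general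
    {F : Type*} [Field F] {K : Type*} [Field K] [Algebra F K]
    {A : Type*} [NonUnitalNonAssocRing A] [Module F A]
    [SMulCommClass F A A] [IsScalarTower F A A]
    {G : Type*} [CommGroup G] (comp : G → Submodule F A) :
    (∀ (H : Type u) (_ : CommGroup H) (comp' : H → Submodule F A),
        IsGrading comp' → IsProperRefinement comp' comp →
          IsProperRefinement (fun h : H => (comp' h).baseChange K)
            (fun g : G => (comp g).baseChange K)) ∧
    (IsFine.{u} (fun g : G => (comp g).baseChange K) → IsFine.{u} comp) :=
  ⟨fun _ _ _ _ h => h.baseChange, IsFine.of_baseChange⟩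

/-- a proper refinement extends to a proper refinement of the extended grading;
consequently if `Γ_K` is fine so is `Γ`. -/
theorem properRefinement_baseChange
    {F : Type*} [Field F] {K : Type*} [Field K] [Algebra F K]
    {A : Type*} [NonUnitalNonAssocRing A] [Module F A]
    [SMulCommClass F A A] [IsScalarTower F A A]
    {G : Type*} [CommGroup G] (comp : G → Submodule F A)
    (hcomp : IsGrading comp) :
    (∀ (H : Type u) (_ : CommGroup H) (comp' : H → Submodule F A),
        IsGrading comp' → IsProperRefinement comp' comp →
          IsProperRefinement (fun h : H => (comp' h).baseChange K)
            (fun g : G => (comp g).baseChange K)) ∧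
    (IsFine.{u} (fun g : G => (comp g).baseChange K) → IsFine.{u} comp) :=
  properRefinement_baseChange_general comp
end
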